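/- arXiv:1512.02973 — 2 statements merged into one kernel-verified Lean document; each statement's English description precedes it below -/
import Mathlib

section
/- Let n ≥ 1 and let m, l be integers with 0 ≤ m ≤ l and l < n/2. Then g_n(m, n−m) ≤ g_{n−1}(m, l). -/
open Finset

/-- A maximal chain in the Boolean lattice of subsets of `[n] = {1, …, n}`:
`∅ = c 0 ⊂ c 1 ⊂ ⋯ ⊂ c n = [n]` with `|c i| = i`. -/
def IsMaxChainIn (n : ℕ) (c : ℕ → Finset ℕ) : Prop :=
  (∀ i ≤ n, (c i).card = i) ∧ (∀ i < n, c i ⊆ c (i + 1)) ∧ c n = Finset.Icc 1 n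

/-- A cutset in `2^{[n]}`: a collection of subsets of `[n]` meeting every maximal chain. -/
def IsCutsetIn (n : ℕ) (C : Finset (Finset ℕ)) : Prop :=
  (∀ A ∈ C, A ⊆ Finset.Icc 1 n) ∧
    ∀ c : ℕ → Finset ℕ, IsMaxChainIn n c → ∃ i ≤ n, c i ∈ C

/-- `gcut n m l`: the smallest `k` such that there is a cutset in `2^{[n]}` containing
exactly `k` subsets of size `i` for each `m ≤ i ≤ l` and no subsets of any other size. -/
noncomputable def gcut (n m l : ℕ) : ℕ :=
  sInf {k : ℕ | ∃ C : Finset (Finset ℕ), IsCutsetIn n C ∧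
    (∀ A ∈ C, m ≤ A.card ∧ A.card ≤ l) ∧
    ∀ i : ℕ, m ≤ i → i ≤ l → (C.filter fun A => A.card = i).card = k}

lemma chain_mono {n : ℕ} {c : ℕ → Finset ℕ} (hc : IsMaxChainIn n c)
    {i j : ℕ} (hij : i ≤ j) (hjn : j ≤ n) : c i ⊆ c j := by
  induction j with
  | zero => have : i = 0 := by omega
            subst this; exact Finset.Subset.refl _
  | succ j ih =>
    rcases Nat.lt_or_ge i (j+1) with h | h
    · exact (ih (by omega) (by omega)).trans (hc.2.1 j (by omega))
    · have : i = j + 1 := by omega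
      subst this; exact Finset.Subset.refl _

lemma chain_subset {n : ℕ} {c : ℕ → Finset ℕ} (hc : IsMaxChainIn n c)
    {i : ℕ} (hi : i ≤ n) : c i ⊆ Icc 1 n :=
  hc.2.2 ▸ chain_mono hc hi le_rfl

lemma chain_zero {n : ℕ} {c : ℕ → Finset ℕ} (hc : IsMaxChainIn n c) : c 0 = ∅ :=
  Finset.card_eq_zero.mp (hc.1 0 (Nat.zero_le n))

lemma choose_le_half {n a b : ℕ} (hab : a ≤ b) (h2 : 2*b ≤ n) :
    n.choose a ≤ n.choose b := by
  induction b, hab using Nat.le_induction with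
  | base => exact le_rfl
  | succ b hab ih =>
    exact (ih (by omega)).trans (Nat.choose_le_succ_of_lt_half_left (by omega))

lemma choose_le_mid {n a b : ℕ} (hab : a ≤ b) (hb : b ≤ n - a) (han : a ≤ n) :
    n.choose a ≤ n.choose b := by
  rcases le_or_gt (2*b) n with h2 | h2
  · exact choose_le_half hab h2
  · have hbn : b ≤ n := by omega
    rw [← Nat.choose_symm hbn]
    exact choose_le_half (by omega) (by omega)

lemma Icc_erase {n : ℕ} (hn : 1 ≤ n) : (Icc 1 n).erase n = Icc 1 (n-1) := by
  ext x; simp [Finset.mem_erase, Finset.mem_Icc]; omega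

lemma restrict_chain {n : ℕ} (hn : 1 ≤ n) {c : ℕ → Finset ℕ} (hc : IsMaxChainIn n c) :
    ∃ d : ℕ → Finset ℕ, IsMaxChainIn (n-1) d ∧
      ∀ i ≤ n - 1, (d i = c i ∧ n ∉ c i) ∨ (d i = (c (i+1)).erase n ∧ n ∈ c i) := by
  classical
  refine ⟨fun i => if n ∈ c i then (c (i+1)).erase n else c i, ?_, ?_⟩
  · refine ⟨?_, ?_, ?_⟩
    · intro i hi
      by_cases h : n ∈ c i
      · simp only [h, if_true]
        have h1 : n ∈ c (i+1) := chain_mono hc (Nat.le_succ i) (by omega) h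
        rw [Finset.card_erase_of_mem h1, hc.1 (i+1) (by omega)]; omega
      · simp only [h, if_false]
        exact hc.1 i (by omega)
    · intro i hi
      have key : ∀ j ≤ n, n ∉ c j → c j ⊆ (c (j+1)).erase n → True := fun _ _ _ _ => trivial
      by_cases h : n ∈ c i
      · have h' : n ∈ c (i+1) := chain_mono hc (Nat.le_succ i) (by omega) h
        simp only [h, h', if_true]
        exact Finset.erase_subset_erase _ (hc.2.1 (i+1) (by omega))
      · by_cases h' : n ∈ c (i+1)
        · simp only [h, h', if_true, if_false]
          intro x hx
          refine Finset.mem_erase.mpr ⟨?_, hc.2.1 (i+1) (by omega) (hc.2.1 i (by omega) hx)⟩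
          rintro rfl; exact h hx
        · simp only [h, h', if_false]
          exact hc.2.1 i (by omega)
    · have hnn : n ∈ c n := hc.2.2 ▸ Finset.mem_Icc.mpr ⟨hn, le_rfl⟩
      by_cases h : n ∈ c (n-1)
      · simp only [h, if_true]
        have : n - 1 + 1 = n := by omega
        rw [this, hc.2.2, Icc_erase hn]
      · simp only [h, if_false]
        apply Finset.eq_of_subset_of_card_le
        · intro x hx
          have hx' : x ∈ Icc 1 n := chain_subset hc (by omega) hx
          rw [← Icc_erase hn]
          exact Finset.mem_erase.mpr ⟨fun e => h (e ▸ hx), hx'⟩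
        · rw [hc.1 (n-1) (by omega), Nat.card_Icc]; omega
  · intro i hi
    by_cases h : n ∈ c i
    · right; simp [h]
    · left; simp [h]

lemma compl_chain {n : ℕ} {c : ℕ → Finset ℕ} (hc : IsMaxChainIn n c) :
    IsMaxChainIn n (fun j => Icc 1 n \ c (n - j)) := by
  refine ⟨?_, ?_, ?_⟩
  · intro j hj
    rw [Finset.card_sdiff_of_subset (chain_subset hc (by omega)), Nat.card_Icc,
      hc.1 (n-j) (by omega)]
    omega
  · intro j hj
    apply Finset.sdiff_subset_sdiff (Finset.Subset.refl _)
    have : n - (j+1) + 1 = n - j := by omega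
    calc c (n - (j+1)) ⊆ c (n - (j+1) + 1) := hc.2.1 _ (by omega)
      _ = c (n - j) := by rw [this]
  · simp [Nat.sub_self, chain_zero hc]

lemma cutset_step {n m l : ℕ} (hn : 1 ≤ n) (hml : m ≤ l) (hl : 2*l < n)
    {C : Finset (Finset ℕ)} (hC : IsCutsetIn (n-1) C)
    (hcard : ∀ A ∈ C, m ≤ A.card ∧ A.card ≤ l) :
    IsCutsetIn n (C ∪ C.image (fun A => Icc 1 n \ A)) := by
  classical
  constructor
  · intro A hA
    rcases Finset.mem_union.mp hA with h | h
    · exact (hC.1 A h).trans (by apply Finset.Icc_subset_Icc_right; omega)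
    · rcases Finset.mem_image.mp h with ⟨B, _, rfl⟩
      exact Finset.sdiff_subset
  · intro c hc
    obtain ⟨d, hd, hdc⟩ := restrict_chain hn hc
    obtain ⟨i, hi, hiC⟩ := hC.2 d hd
    rcases hdc i hi with ⟨he, hni⟩ | ⟨he, hni⟩
    · exact ⟨i, by omega, Finset.mem_union_left _ (he ▸ hiC)⟩
    · -- n ∈ c i, with i = card (d i) ≤ l
      have hil : i ≤ l := by
        have := (hcard _ (he ▸ hiC)).2
        rwa [← he, hd.1 i hi] at this
      -- complement chain
      have hcc := compl_chain hc
      obtain ⟨d', hd', hdc'⟩ := restrict_chain hn hcc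
      obtain ⟨s, hs, hsC⟩ := hC.2 d' hd'
      rcases hdc' s hs with ⟨he', hns⟩ | ⟨he', hns⟩
      · -- d' s = Icc 1 n \ c (n - s) ∈ C
        refine ⟨n - s, by omega, Finset.mem_union_right _ ?_⟩
        refine Finset.mem_image.mpr ⟨Icc 1 n \ c (n - s), he' ▸ hsC, ?_⟩
        exact Finset.sdiff_sdiff_eq_self (chain_subset hc (by omega))
      · -- n ∈ (fun j => Icc 1 n \ c (n-j)) s, i.e. n ∉ c (n - s); contradiction
        have hsl : s ≤ l := by
          have := (hcard _ (he' ▸ hsC)).2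
          rwa [← he', hd'.1 s hs] at this
        have hns2 : n ∉ c (n - s) := (Finset.mem_sdiff.mp hns).2
        have : n ∈ c (n - s) := chain_mono hc (by omega) (by omega) hni
        exact absurd this hns2

lemma mem_step {n m l k : ℕ} (hn : 1 ≤ n) (hml : m ≤ l) (hl : 2*l < n)
    (C : Finset (Finset ℕ)) (hC : IsCutsetIn (n-1) C)
    (hcard : ∀ A ∈ C, m ≤ A.card ∧ A.card ≤ l)
    (hcnt : ∀ i, m ≤ i → i ≤ l → (C.filter fun A => A.card = i).card = k) :
    ∃ D : Finset (Finset ℕ), IsCutsetIn n D ∧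
      (∀ A ∈ D, m ≤ A.card ∧ A.card ≤ n - m) ∧
      ∀ i, m ≤ i → i ≤ n - m → (D.filter fun A => A.card = i).card = k := by
  classical
  -- bound on k
  have hk : k ≤ (n-1).choose l := by
    rw [← hcnt l hml le_rfl]
    have hsub : (C.filter fun A => A.card = l) ⊆ powersetCard l (Icc 1 (n-1)) := by
      intro A hA
      rw [Finset.mem_filter] at hA
      exact Finset.mem_powersetCard.mpr ⟨hC.1 A hA.1, hA.2⟩
    calc (C.filter fun A => A.card = l).card ≤ _ := Finset.card_le_card hsub
      _ = (Icc 1 (n-1)).card.choose l := Finset.card_powersetCard _ _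
      _ = (n-1).choose l := by rw [Nat.card_Icc]; congr 1
  have hkj : ∀ j, l < j → j < n - l → k ≤ (powersetCard j (Icc 1 n)).card := by
    intro j hj1 hj2
    rw [Finset.card_powersetCard, Nat.card_Icc]
    have h1 : n + 1 - 1 = n := by omega
    rw [h1]
    calc k ≤ (n-1).choose l := hk
      _ ≤ n.choose l := Nat.choose_le_choose l (by omega)
      _ ≤ n.choose j := choose_le_mid (by omega) (by omega) (by omega)
  -- choose padding sets
  have hT : ∀ j : ℕ, ∃ T : Finset (Finset ℕ), T ⊆ powersetCard j (Icc 1 n) ∧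
      (l < j → j < n - l → T.card = k) := by
    intro j
    by_cases h : l < j ∧ j < n - l
    · obtain ⟨T, hT1, hT2⟩ := Finset.exists_subset_card_eq (hkj j h.1 h.2)
      exact ⟨T, hT1, fun _ _ => hT2⟩
    · exact ⟨∅, Finset.empty_subset _, fun h1 h2 => absurd ⟨h1, h2⟩ h⟩
  choose T hTsub hTcard using hT
  have hTmem : ∀ j A, A ∈ T j → A ⊆ Icc 1 n ∧ A.card = j := by
    intro j A hA
    exact Finset.mem_powersetCard.mp (hTsub j hA)
  refine ⟨(C ∪ C.image (fun A => Icc 1 n \ A)) ∪ (Finset.Ioo l (n-l)).biUnion T, ?_, ?_, ?_⟩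
  · -- cutset
    have h0 := cutset_step hn hml hl hC hcard
    constructor
    · intro A hA
      rcases Finset.mem_union.mp hA with h | h
      · exact h0.1 A h
      · rcases Finset.mem_biUnion.mp h with ⟨j, _, hj⟩
        exact (hTmem j A hj).1
    · intro c hc
      obtain ⟨i, hi, hm⟩ := h0.2 c hc
      exact ⟨i, hi, Finset.mem_union_left _ hm⟩
  · -- card bounds
    intro A hA
    have hCsub : ∀ B ∈ C, B ⊆ Icc 1 n := fun B hB =>
      (hC.1 B hB).trans (Finset.Icc_subset_Icc_right (by omega))
    rcases Finset.mem_union.mp hA with h | h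
    · rcases Finset.mem_union.mp h with h | h
      · obtain ⟨h1, h2⟩ := hcard A h; omega
      · rcases Finset.mem_image.mp h with ⟨B, hB, rfl⟩
        obtain ⟨h1, h2⟩ := hcard B hB
        rw [Finset.card_sdiff_of_subset (hCsub B hB), Nat.card_Icc]
        omega
    · rcases Finset.mem_biUnion.mp h with ⟨j, hj, hAj⟩
      rw [Finset.mem_Ioo] at hj
      rw [(hTmem j A hAj).2]
      omega
  · -- counts
    intro i him hinm
    have hCsub : ∀ B ∈ C, B ⊆ Icc 1 n := fun B hB =>
      (hC.1 B hB).trans (Finset.Icc_subset_Icc_right (by omega))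
    have hfcard : ∀ B ∈ C, (Icc 1 n \ B).card = n - B.card := by
      intro B hB
      rw [Finset.card_sdiff_of_subset (hCsub B hB), Nat.card_Icc]
      omega
    by_cases h1 : i ≤ l
    · -- low regime
      have heq : ((C ∪ C.image (fun A => Icc 1 n \ A)) ∪ (Finset.Ioo l (n-l)).biUnion T).filter
          (fun A => A.card = i) = C.filter (fun A => A.card = i) := by
        ext A
        simp only [Finset.mem_filter, Finset.mem_union, Finset.mem_biUnion, Finset.mem_image]
        constructor
        · rintro ⟨(hA | ⟨B, hB, rfl⟩) | ⟨j, hj, hAj⟩, hcA⟩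
          · exact ⟨hA, hcA⟩
          · have := hfcard B hB
            have := (hcard B hB).2
            omega
          · rw [Finset.mem_Ioo] at hj
            have := (hTmem j A hAj).2
            omega
        · rintro ⟨hA, hcA⟩
          exact ⟨Or.inl (Or.inl hA), hcA⟩
      rw [heq]
      exact hcnt i him h1
    · by_cases h2 : i < n - l
      · -- middle regime
        have heq : ((C ∪ C.image (fun A => Icc 1 n \ A)) ∪ (Finset.Ioo l (n-l)).biUnion T).filter
            (fun A => A.card = i) = T i := by
          ext A
          simp only [Finset.mem_filter, Finset.mem_union, Finset.mem_biUnion, Finset.mem_image]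
          constructor
          · rintro ⟨(hA | ⟨B, hB, rfl⟩) | ⟨j, hj, hAj⟩, hcA⟩
            · have := (hcard A hA).2; omega
            · have := hfcard B hB
              have := (hcard B hB).1
              have := (hcard B hB).2
              omega
            · have := (hTmem j A hAj).2
              have hji : j = i := by omega
              exact hji ▸ hAj
          · intro hA
            refine ⟨Or.inr ⟨i, Finset.mem_Ioo.mpr ⟨by omega, h2⟩, hA⟩, (hTmem i A hA).2⟩
        rw [heq]
        exact hTcard i (by omega) h2
      · -- high regime
        have heq : ((C ∪ C.image (fun A => Icc 1 n \ A)) ∪ (Finset.Ioo l (n-l)).biUnion T).filter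
            (fun A => A.card = i) =
            (C.filter (fun B => B.card = n - i)).image (fun A => Icc 1 n \ A) := by
          ext A
          simp only [Finset.mem_filter, Finset.mem_union, Finset.mem_biUnion, Finset.mem_image]
          constructor
          · rintro ⟨(hA | ⟨B, hB, rfl⟩) | ⟨j, hj, hAj⟩, hcA⟩
            · have := (hcard A hA).2; omega
            · have h3 := hfcard B hB
              have h4 := (hcard B hB).2
              exact ⟨B, ⟨hB, by omega⟩, rfl⟩
            · rw [Finset.mem_Ioo] at hj
              have := (hTmem j A hAj).2
              omega
          · rintro ⟨B, ⟨hB, hBc⟩, rfl⟩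
            have h3 := hfcard B hB
            refine ⟨Or.inl (Or.inr ⟨B, hB, rfl⟩), ?_⟩
            have := (hcard B hB).2
            omega
        rw [heq, Finset.card_image_of_injOn, hcnt (n-i) (by omega) (by omega)]
        intro B1 hB1 B2 hB2 hf
        simp only [Finset.coe_filter, Set.mem_setOf_eq] at hB1 hB2
        have e1 := Finset.sdiff_sdiff_eq_self (hCsub B1 hB1.1)
        have e2 := Finset.sdiff_sdiff_eq_self (hCsub B2 hB2.1)
        rw [← e1, ← e2]; exact congrArg (SDiff.sdiff (Icc 1 n)) hf

lemma gcut_set_nonempty {N m l : ℕ} (hml : m ≤ l) (hlN : m + l ≤ N) :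
    ∃ (k : ℕ) (C : Finset (Finset ℕ)), IsCutsetIn N C ∧
      (∀ A ∈ C, m ≤ A.card ∧ A.card ≤ l) ∧
      ∀ i, m ≤ i → i ≤ l → (C.filter fun A => A.card = i).card = N.choose m := by
  classical
  have hcc : ∀ j, m ≤ j → j ≤ l → N.choose m ≤ (powersetCard j (Icc 1 N)).card := by
    intro j hj1 hj2
    rw [Finset.card_powersetCard, Nat.card_Icc]
    have h1 : N + 1 - 1 = N := by omega
    rw [h1]
    exact choose_le_mid hj1 (by omega) (by omega)
  have hT : ∀ j : ℕ, ∃ T : Finset (Finset ℕ), T ⊆ powersetCard j (Icc 1 N) ∧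
      (m ≤ j → j ≤ l → T.card = N.choose m) := by
    intro j
    by_cases h : m ≤ j ∧ j ≤ l
    · obtain ⟨T, hT1, hT2⟩ := Finset.exists_subset_card_eq (hcc j h.1 h.2)
      exact ⟨T, hT1, fun _ _ => hT2⟩
    · exact ⟨∅, Finset.empty_subset _, fun h1 h2 => absurd ⟨h1, h2⟩ h⟩
  choose T hTsub hTcard using hT
  have hTmem : ∀ j A, A ∈ T j → A ⊆ Icc 1 N ∧ A.card = j := fun j A hA =>
    Finset.mem_powersetCard.mp (hTsub j hA)
  have hTm : T m = powersetCard m (Icc 1 N) := by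
    apply Finset.eq_of_subset_of_card_le (hTsub m)
    rw [hTcard m le_rfl hml, Finset.card_powersetCard, Nat.card_Icc]
    have h1 : N + 1 - 1 = N := by omega
    rw [h1]
  refine ⟨N.choose m, (Finset.Icc m l).biUnion T, ⟨?_, ?_⟩, ?_, ?_⟩
  · intro A hA
    rcases Finset.mem_biUnion.mp hA with ⟨j, _, hj⟩
    exact (hTmem j A hj).1
  · intro c hc
    refine ⟨m, by omega, Finset.mem_biUnion.mpr ⟨m, Finset.mem_Icc.mpr ⟨le_rfl, hml⟩, ?_⟩⟩
    rw [hTm]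
    exact Finset.mem_powersetCard.mpr ⟨chain_subset hc (by omega), hc.1 m (by omega)⟩
  · intro A hA
    rcases Finset.mem_biUnion.mp hA with ⟨j, hj, hAj⟩
    rw [Finset.mem_Icc] at hj
    rw [(hTmem j A hAj).2]
    exact hj
  · intro i hi1 hi2
    have heq : ((Finset.Icc m l).biUnion T).filter (fun A => A.card = i) = T i := by
      ext A
      simp only [Finset.mem_filter, Finset.mem_biUnion]
      constructor
      · rintro ⟨⟨j, hj, hAj⟩, hcA⟩
        have := (hTmem j A hAj).2
        have hji : j = i := by omega
        exact hji ▸ hAj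
      · intro hA
        exact ⟨⟨i, Finset.mem_Icc.mpr ⟨hi1, hi2⟩, hA⟩, (hTmem i A hA).2⟩
    rw [heq]
    exact hTcard i hi1 hi2


/-- For `n ≥ 1`, `0 ≤ m ≤ l` and `l < n/2`, one has `g_n(m,n-m) ≤ g_{n-1}(m,l)`. -/
theorem gcut_complement_le (n m l : ℕ) (hn : 1 ≤ n) (hml : m ≤ l) (hl : 2 * l < n) :
    gcut n m (n - m) ≤ gcut (n - 1) m l := by
  have hne : {k : ℕ | ∃ C : Finset (Finset ℕ), IsCutsetIn (n-1) C ∧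
      (∀ A ∈ C, m ≤ A.card ∧ A.card ≤ l) ∧
      ∀ i : ℕ, m ≤ i → i ≤ l → (C.filter fun A => A.card = i).card = k}.Nonempty := by
    obtain ⟨k, C, h1, h2, h3⟩ := gcut_set_nonempty hml (show m + l ≤ n - 1 by omega)
    exact ⟨(n-1).choose m, C, h1, h2, h3⟩
  have hmem := Nat.sInf_mem hne
  obtain ⟨C, hC, hcard, hcnt⟩ := hmem
  obtain ⟨D, hD, hDcard, hDcnt⟩ := mem_step hn hml (by omega) C hC hcard hcnt
  exact Nat.sInf_le ⟨D, hD, hDcard, hDcnt⟩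
end

section
/- Let n ≥ 0 and let m, l, l' be integers with 0 ≤ m ≤ l ≤ l' ≤ n−m. Then g_n(m, l') ≤ g_n(m, l); that is, g_n(m, l) is weakly decreasing in l on the range m ≤ l ≤ n−m. -/
open Finset

/-- `choose n` is monotone up to the middle. -/
lemma choose_mono_half {n a b : ℕ} (hab : a ≤ b) (hb : b ≤ n / 2) :
    n.choose a ≤ n.choose b := by
  induction b with
  | zero => simp_all
  | succ b ih =>
    rcases Nat.eq_or_lt_of_le hab with rfl | h
    · exact le_rfl
    · exact le_trans (ih (by omega) (by omega))
        (Nat.choose_le_succ_of_lt_half_left (by omega))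

lemma choose_mid {n m i : ℕ} (hmi : m ≤ i) (hin : i ≤ n - m) :
    n.choose m ≤ n.choose i := by
  have hin' : i ≤ n := by omega
  by_cases h : i ≤ n / 2
  · exact choose_mono_half hmi h
  · rw [← Nat.choose_symm hin']
    exact choose_mono_half (by omega) (by omega)

/-- Transfer a witness for levels `[m,l]` to levels `[m,l']` by padding with arbitrary
subsets on the new levels. -/
lemma gcut_transfer {n m l l' k : ℕ} (hml : m ≤ l) (hll' : l ≤ l') (hl'n : l' ≤ n - m)
    (h : ∃ C : Finset (Finset ℕ), IsCutsetIn n C ∧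
      (∀ A ∈ C, m ≤ A.card ∧ A.card ≤ l) ∧
      ∀ i : ℕ, m ≤ i → i ≤ l → (C.filter fun A => A.card = i).card = k) :
    ∃ C : Finset (Finset ℕ), IsCutsetIn n C ∧
      (∀ A ∈ C, m ≤ A.card ∧ A.card ≤ l') ∧
      ∀ i : ℕ, m ≤ i → i ≤ l' → (C.filter fun A => A.card = i).card = k := by
  obtain ⟨C, hC, hbound, hcount⟩ := h
  have hcard : ∀ i : ℕ, ((Icc 1 n).powersetCard i).card = n.choose i := by
    intro i
    rw [card_powersetCard, Nat.card_Icc, Nat.add_sub_cancel]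
  have hkle : k ≤ n.choose m := by
    rw [← hcount m le_rfl hml, ← hcard m]
    apply card_le_card
    intro A hA
    rw [mem_filter] at hA
    exact mem_powersetCard.2 ⟨hC.1 A hA.1, hA.2⟩
  have hex : ∀ i : ℕ, ∃ t : Finset (Finset ℕ),
      (l < i ∧ i ≤ l') → t ⊆ (Icc 1 n).powersetCard i ∧ t.card = k := by
    intro i
    by_cases h : l < i ∧ i ≤ l'
    · obtain ⟨t, ht1, ht2⟩ := Finset.exists_subset_card_eq (s := (Icc 1 n).powersetCard i)
        (n := k) (by
          rw [hcard i]
          exact hkle.trans (choose_mid (by omega) (by omega)))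
      exact ⟨t, fun _ => ⟨ht1, ht2⟩⟩
    · exact ⟨∅, fun hh => absurd hh h⟩
  choose t ht using hex
  set T : Finset (Finset ℕ) := (Icc (l + 1) l').biUnion t with hT
  have hTmem : ∀ A ∈ T, A ⊆ Icc 1 n ∧ l + 1 ≤ A.card ∧ A.card ≤ l' := by
    intro A hA
    rw [hT, mem_biUnion] at hA
    obtain ⟨i, hi, hAi⟩ := hA
    rw [mem_Icc] at hi
    obtain ⟨hsub, -⟩ := ht i (by omega)
    have := mem_powersetCard.1 (hsub hAi)
    exact ⟨this.1, by omega, by omega⟩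
  refine ⟨C ∪ T, ⟨?_, ?_⟩, ?_, ?_⟩
  · intro A hA
    rcases mem_union.1 hA with hA | hA
    · exact hC.1 A hA
    · exact (hTmem A hA).1
  · intro c hc
    obtain ⟨i, hi, hci⟩ := hC.2 c hc
    exact ⟨i, hi, mem_union_left _ hci⟩
  · intro A hA
    rcases mem_union.1 hA with hA | hA
    · exact ⟨(hbound A hA).1, le_trans (hbound A hA).2 hll'⟩
    · obtain ⟨-, h1, h2⟩ := hTmem A hA
      exact ⟨by omega, h2⟩
  · intro i him hil'
    by_cases hi : i ≤ l
    · have : (C ∪ T).filter (fun A => A.card = i) = C.filter (fun A => A.card = i) := by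
        ext A
        simp only [mem_filter, mem_union]
        constructor
        · rintro ⟨hA | hA, hcardA⟩
          · exact ⟨hA, hcardA⟩
          · obtain ⟨-, h1, -⟩ := hTmem A hA
            omega
        · rintro ⟨hA, hcardA⟩
          exact ⟨Or.inl hA, hcardA⟩
      rw [this]
      exact hcount i him hi
    · have hti := ht i (by omega)
      have : (C ∪ T).filter (fun A => A.card = i) = t i := by
        ext A
        simp only [mem_filter, mem_union]
        constructor
        · rintro ⟨hA | hA, hcardA⟩
          · have := (hbound A hA).2
            omega
          · rw [hT, mem_biUnion] at hA
            obtain ⟨j, hj, hAj⟩ := hA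
            rw [mem_Icc] at hj
            obtain ⟨hsub, -⟩ := ht j (by omega)
            have : A.card = j := (mem_powersetCard.1 (hsub hAj)).2
            have : j = i := by omega
            subst this
            exact hAj
        · intro hA
          refine ⟨Or.inr ?_, (mem_powersetCard.1 (hti.1 hA)).2⟩
          rw [hT, mem_biUnion]
          exact ⟨i, mem_Icc.2 ⟨by omega, hil'⟩, hA⟩
      rw [this]
      exact hti.2

/-- The full level `m` is a witness for `gcut n m m` with `k = n.choose m`. -/
lemma gcut_base {n m : ℕ} (hm : m ≤ n) :
    ∃ C : Finset (Finset ℕ), IsCutsetIn n C ∧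
      (∀ A ∈ C, m ≤ A.card ∧ A.card ≤ m) ∧
      ∀ i : ℕ, m ≤ i → i ≤ m → (C.filter fun A => A.card = i).card = n.choose m := by
  refine ⟨(Icc 1 n).powersetCard m, ⟨?_, ?_⟩, ?_, ?_⟩
  · intro A hA
    exact (mem_powersetCard.1 hA).1
  · rintro c ⟨h1, h2, h3⟩
    have key : ∀ d j : ℕ, j + d ≤ n → c j ⊆ c (j + d) := by
      intro d
      induction d with
      | zero => intro j _; exact subset_rfl
      | succ d ih =>
        intro j hj
        refine (ih j (by omega)).trans ?_
        exact h2 (j + d) (by omega)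
    refine ⟨m, hm, mem_powersetCard.2 ⟨?_, h1 m hm⟩⟩
    have := key (n - m) m (by omega)
    rw [show m + (n - m) = n by omega, h3] at this
    exact this
  · intro A hA
    have := (mem_powersetCard.1 hA).2
    omega
  · intro i him hil
    have : i = m := le_antisymm hil him
    subst this
    have : ((Icc 1 n).powersetCard i).filter (fun A => A.card = i)
        = (Icc 1 n).powersetCard i := by
      apply filter_true_of_mem
      intro A hA
      exact (mem_powersetCard.1 hA).2
    rw [this, card_powersetCard, Nat.card_Icc, Nat.add_sub_cancel]

/-- `g_n(m,l)` is weakly decreasing in `l` on the range `m ≤ l ≤ n-m`: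
if `0 ≤ m ≤ l ≤ l' ≤ n-m`, then `g_n(m,l') ≤ g_n(m,l)`. -/
theorem gcut_anti (n m l l' : ℕ) (hml : m ≤ l) (hll' : l ≤ l') (hl'n : l' ≤ n - m) :
    gcut n m l' ≤ gcut n m l := by
  have hmn : m ≤ n := by omega
  have hne : (gcut n m l) ∈ {k : ℕ | ∃ C : Finset (Finset ℕ), IsCutsetIn n C ∧
      (∀ A ∈ C, m ≤ A.card ∧ A.card ≤ l) ∧
      ∀ i : ℕ, m ≤ i → i ≤ l → (C.filter fun A => A.card = i).card = k} := by
    apply Nat.sInf_mem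
    exact ⟨n.choose m, gcut_transfer le_rfl hml (by omega) (gcut_base hmn)⟩
  exact Nat.sInf_le (gcut_transfer hml hll' hl'n hne)
end
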